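/- For 0 < r < 1 and x ∈ (0, π), ι(x) > 0, and ι attains its maximum on [0, π] at the unique point a_r ∈ (0, π/2) with cos a_r = r, where ι(a_r) = π/2 − a_r. -/

import Mathlib

/-!
On `[0, π]` the point `cos x - r + i sin x` factors as `e^{ix} (1 - r e^{-ix})`; the second factor
has positive real part and argument at most `π - x`, so the arguments add without wrapping and
`ι(x) = arctan (r sin x / (1 - r cos x))`. Writing `r = cos a`,
`cot a - cos a sin x / (1 - cos a cos x) = cos a (1 - cos (x - a)) / (sin a (1 - cos a cos x))`,
which is nonnegative and vanishes on `[0, π]` only at `x = a`;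
finally `ι(a) = arctan (cot a) = π/2 - a`.
-/

open Real

/-- The incident angle function of the off-center reflection. -/
noncomputable def iota (r x : ℝ) : ℝ :=
  Complex.arg ((Real.cos x - r : ℝ) + (Real.sin x : ℝ) * Complex.I) - x

/-- Lift of the off-center reflection taking 0 to Ω. -/
noncomputable def Rt (r Ω x : ℝ) : ℝ := x + Ω - 2 * iota r x

lemma Complex.arg_add_mul_I_eq_arctan {a b : ℝ} (ha : 0 < a) :
    arg (a + b * I) = Real.arctan (b / a) := by
  have hre : (a + b * I : ℂ).re = a := by simp
  have him : (a + b * I : ℂ).im = b := by simp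
  have h := abs_lt.1 (abs_arg_lt_pi_div_two_iff.2 (Or.inl (hre ▸ ha)))
  have htan := tan_arg (a + b * I)
  rw [hre, him] at htan
  rw [← htan, Real.arctan_tan h.1 h.2]

section IncidentAngle

open Set

variable {r x a : ℝ}

lemma one_sub_mul_cos_pos (hr : |r| < 1) (x : ℝ) : 0 < 1 - r * cos x := by
  have : r * cos x < 1 := calc
    r * cos x ≤ |r| * |cos x| := (le_abs_self _).trans (abs_mul _ _).le
    _ ≤ |r| := mul_le_of_le_one_right (abs_nonneg r) (abs_cos_le_one x)
    _ < 1 := hr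
  linarith

lemma cos_sub_add_sin_mul_I_eq_mul (r x : ℝ) :
    ((cos x - r : ℝ) : ℂ) + (sin x : ℝ) * Complex.I =
      (cos x + sin x * Complex.I) * ((1 - r * cos x : ℝ) + (r * sin x : ℝ) * Complex.I) := by
  have h : (sin x : ℂ) ^ 2 + (cos x : ℂ) ^ 2 = 1 := by exact_mod_cast sin_sq_add_cos_sq x
  simp only [Complex.ofReal_sub, Complex.ofReal_mul, Complex.ofReal_one]
  linear_combination (r : ℂ) * h - r * (sin x : ℂ) ^ 2 * Complex.I_sq

lemma arctan_le_pi_sub (hr : |r| < 1) (hx : x ∈ Icc 0 π) :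
    arctan (r * sin x / (1 - r * cos x)) ≤ π - x := by
  rcases le_or_gt x (π / 2) with hx2 | hx2
  · linarith [arctan_lt_pi_div_two (r * sin x / (1 - r * cos x))]
  have hcos : 0 < -cos x := by
    rw [← cos_pi_sub]; exact cos_pos_of_mem_Ioo ⟨by linarith [hx.2], by linarith⟩
  have hsin : 0 ≤ sin x := sin_nonneg_of_nonneg_of_le_pi hx.1 hx.2
  calc arctan (r * sin x / (1 - r * cos x))
      ≤ arctan (tan (π - x)) := by
        gcongr
        rw [tan_pi_sub, tan_eq_sin_div_cos, ← div_neg,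
          div_le_div_iff₀ (one_sub_mul_cos_pos hr x) hcos]
        nlinarith
    _ = π - x := arctan_tan (by linarith [hx.2]) (by linarith)

lemma iota_eq_arctan (hr : |r| < 1) (hx : x ∈ Icc 0 π) :
    iota r x = arctan (r * sin x / (1 - r * cos x)) := by
  have hd := one_sub_mul_cos_pos hr x
  have hu : Complex.arg (Complex.cos x + Complex.sin x * Complex.I) = x :=
    Complex.arg_cos_add_sin_mul_I ⟨by linarith [hx.1, pi_pos], hx.2⟩
  have hu0 : Complex.cos x + Complex.sin x * Complex.I ≠ 0 := by
    rw [← Complex.exp_mul_I]; exact Complex.exp_ne_zero _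
  have hw0 : ((1 - r * cos x : ℝ) + (r * sin x : ℝ) * Complex.I : ℂ) ≠ 0 :=
    Complex.ne_zero_of_re_pos (by simpa [-Complex.ofReal_sub, -Complex.ofReal_mul] using hd)
  have hsum : x + arctan (r * sin x / (1 - r * cos x)) ∈ Ioc (-π) π := by
    constructor
    · linarith [hx.1, neg_pi_div_two_lt_arctan (r * sin x / (1 - r * cos x)), pi_pos]
    · linarith [arctan_le_pi_sub hr hx]
  rw [iota, cos_sub_add_sin_mul_I_eq_mul, Complex.ofReal_cos, Complex.ofReal_sin,
    Complex.arg_mul hu0 hw0, hu, Complex.arg_add_mul_I_eq_arctan hd, add_sub_cancel_left]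
  rwa [hu, Complex.arg_add_mul_I_eq_arctan hd]

lemma iota_pos (hr0 : 0 < r) (hr1 : r < 1) (hx : x ∈ Ioo 0 π) : 0 < iota r x := by
  have hr : |r| < 1 := abs_lt.2 ⟨by linarith, hr1⟩
  rw [iota_eq_arctan hr (Ioo_subset_Icc_self hx), arctan_pos]
  exact div_pos (mul_pos hr0 (sin_pos_of_pos_of_lt_pi hx.1 hx.2)) (one_sub_mul_cos_pos hr x)

lemma cos_div_sin_sub_cos_mul_sin_div (hs : sin a ≠ 0) (hd : 1 - cos a * cos x ≠ 0) :
    cos a / sin a - cos a * sin x / (1 - cos a * cos x) =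
      cos a * (1 - cos (x - a)) / (sin a * (1 - cos a * cos x)) := by
  rw [cos_sub, div_sub_div _ _ hs hd]
  ring

lemma abs_cos_lt_one_of_mem_Ioo (ha : a ∈ Ioo 0 (π / 2)) : |cos a| < 1 := by
  have hs := sin_pos_of_pos_of_lt_pi ha.1 (by linarith [ha.2, pi_pos])
  have hc := cos_pos_of_mem_Ioo ⟨by linarith [ha.1, pi_pos], ha.2⟩
  rw [abs_lt]
  constructor <;> nlinarith [sin_sq_add_cos_sq a]

lemma cos_mul_sin_div_le (ha : a ∈ Ioo 0 (π / 2)) :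
    cos a * sin x / (1 - cos a * cos x) ≤ cos a / sin a := by
  have hc := cos_pos_of_mem_Ioo ⟨by linarith [ha.1, pi_pos], ha.2⟩
  have hs := sin_pos_of_pos_of_lt_pi ha.1 (by linarith [ha.2, pi_pos])
  have hd := one_sub_mul_cos_pos (abs_cos_lt_one_of_mem_Ioo ha) x
  rw [← sub_nonneg, cos_div_sin_sub_cos_mul_sin_div hs.ne' hd.ne']
  have := cos_le_one (x - a)
  positivity

lemma eq_of_cos_mul_sin_div_eq (ha : a ∈ Ioo 0 (π / 2)) (hx : x ∈ Icc 0 π)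
    (h : cos a * sin x / (1 - cos a * cos x) = cos a / sin a) : x = a := by
  have hc := cos_pos_of_mem_Ioo ⟨by linarith [ha.1, pi_pos], ha.2⟩
  have hs := sin_pos_of_pos_of_lt_pi ha.1 (by linarith [ha.2, pi_pos])
  have hd := one_sub_mul_cos_pos (abs_cos_lt_one_of_mem_Ioo ha) x
  have h0 : cos a / sin a - cos a * sin x / (1 - cos a * cos x) = 0 := by rw [h, sub_self]
  rw [cos_div_sin_sub_cos_mul_sin_div hs.ne' hd.ne'] at h0
  have hcos : cos (x - a) = 1 := by
    have : 1 - cos (x - a) = 0 := by simpa [hc.ne', hs.ne', hd.ne'] using h0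
    linarith
  have := (cos_eq_one_iff_of_lt_of_lt (by linarith [hx.1, ha.2, pi_pos])
    (by linarith [hx.2, ha.1, pi_pos])).1 hcos
  linarith

lemma iota_cos_self_eq_arctan (ha : a ∈ Ioo 0 (π / 2)) :
    iota (cos a) a = arctan (cos a / sin a) := by
  have hs := sin_pos_of_pos_of_lt_pi ha.1 (by linarith [ha.2, pi_pos])
  rw [iota_eq_arctan (abs_cos_lt_one_of_mem_Ioo ha) ⟨ha.1.le, by linarith [ha.2, pi_pos]⟩,
    show 1 - cos a * cos a = sin a * sin a by linear_combination -sin_sq_add_cos_sq a,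
    mul_div_mul_right _ _ hs.ne']

lemma iota_cos_self (ha : a ∈ Ioo 0 (π / 2)) : iota (cos a) a = π / 2 - a := by
  rw [iota_cos_self_eq_arctan ha]
  refine arctan_eq_of_tan_eq ?_ ⟨by linarith [ha.2, pi_pos], by linarith [ha.1]⟩
  rw [tan_pi_div_two_sub, tan_eq_sin_div_cos, inv_div]

lemma iota_cos_le (ha : a ∈ Ioo 0 (π / 2)) (hx : x ∈ Icc 0 π) :
    iota (cos a) x ≤ iota (cos a) a := by
  rw [iota_cos_self_eq_arctan ha, iota_eq_arctan (abs_cos_lt_one_of_mem_Ioo ha) hx]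
  exact arctan_strictMono.monotone (cos_mul_sin_div_le ha)

lemma eq_of_iota_cos_eq (ha : a ∈ Ioo 0 (π / 2)) (hx : x ∈ Icc 0 π)
    (h : iota (cos a) x = iota (cos a) a) : x = a := by
  rw [iota_cos_self_eq_arctan ha, iota_eq_arctan (abs_cos_lt_one_of_mem_Ioo ha) hx] at h
  exact eq_of_cos_mul_sin_div_eq ha hx (arctan_injective h)

end IncidentAngle

theorem stmt_7 (r : ℝ) (hr0 : 0 < r) (hr1 : r < 1) :
    (∀ x ∈ Set.Ioo 0 Real.pi, 0 < iota r x) ∧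
    Real.arccos r ∈ Set.Ioo 0 (Real.pi / 2) ∧
    iota r (Real.arccos r) = Real.pi / 2 - Real.arccos r ∧
    (∀ x ∈ Set.Icc 0 Real.pi, iota r x ≤ iota r (Real.arccos r)) ∧
    (∀ x ∈ Set.Icc 0 Real.pi, iota r x = iota r (Real.arccos r) →
      x = Real.arccos r) := by
  obtain ⟨a, ha, rfl⟩ : ∃ a ∈ Set.Ioo 0 (π / 2), cos a = r :=
    ⟨arccos r, ⟨arccos_pos.2 hr1, arccos_lt_pi_div_two.2 hr0⟩,
      cos_arccos (by linarith) hr1.le⟩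
  rw [arccos_cos ha.1.le (by linarith [ha.2, pi_pos])]
  exact ⟨fun x hx => iota_pos hr0 hr1 hx, ha, iota_cos_self ha, fun x hx => iota_cos_le ha hx,
    fun x hx => eq_of_iota_cos_eq ha hx⟩
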